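/- Any totally ordered resource theory allows for free transformations between any two pure states: if for every pair of density matrices ρ, σ at least one of ρ → σ or σ → ρ holds, then for any two pure states |ψ⟩ and |φ⟩ the conversion |ψ⟩⟨ψ| → |φ⟩⟨φ| is possible by free operations. -/

import Mathlib

open scoped Matrix Kronecker ComplexOrder

noncomputable section

/-- A density matrix: positive semidefinite with unit trace. -/
def IsDensityMatrix {ι : Type*} [Fintype ι] (ρ : Matrix ι ι ℂ) : Prop :=
  ρ.PosSemidef ∧ ρ.trace = 1

/-- The trace norm `‖M‖₁ = Tr √(M† M)`. -/
noncomputable def traceNorm {ι : Type*} [Fintype ι] [DecidableEq ι]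
    (M : Matrix ι ι ℂ) : ℝ :=
  (((Matrix.posSemidef_conjTranspose_mul_self M).1.eigenvectorUnitary.1 *
      Matrix.diagonal (((↑) : ℝ → ℂ) ∘ (√·) ∘ (Matrix.posSemidef_conjTranspose_mul_self M).1.eigenvalues) *
      (star (Matrix.posSemidef_conjTranspose_mul_self M).1.eigenvectorUnitary : Matrix ι ι ℂ)).trace).re

/-- The amplification `Λ ⊗ id_k` of a linear map on matrices. -/
def amplify {ι : Type*} [Fintype ι] [DecidableEq ι]
    (Λ : Matrix ι ι ℂ →ₗ[ℂ] Matrix ι ι ℂ) (k : ℕ)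
    (M : Matrix (ι × Fin k) (ι × Fin k) ℂ) : Matrix (ι × Fin k) (ι × Fin k) ℂ :=
  Matrix.of fun p q => Λ (Matrix.of fun i j => M (i, p.2) (j, q.2)) p.1 q.1

/-- A linear map on matrices is CPTP (a quantum channel) if all its amplifications
preserve positive semidefiniteness and it preserves the trace. -/
def IsCPTP {ι : Type*} [Fintype ι] [DecidableEq ι]
    (Λ : Matrix ι ι ℂ →ₗ[ℂ] Matrix ι ι ℂ) : Prop :=
  (∀ (k : ℕ) (M : Matrix (ι × Fin k) (ι × Fin k) ℂ),
      M.PosSemidef → (amplify Λ k M).PosSemidef) ∧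
  (∀ M, (Λ M).trace = M.trace)

/-- A quantum channel on a `d`-dimensional system. -/
structure QChannel (d : ℕ) where
  toFun : Matrix (Fin d) (Fin d) ℂ →ₗ[ℂ] Matrix (Fin d) (Fin d) ℂ
  cptp : IsCPTP toFun

/-- A resource theory: a convex compact set `F` of free states and a set `O` of free
operations containing the identity, closed under composition, preserving `F`, and
containing the state-preparation channel `ρ ↦ Tr(ρ)σ` for every free `σ`. -/
structure ResourceTheory (d : ℕ) where
  F : Set (Matrix (Fin d) (Fin d) ℂ)
  O : Set (QChannel d)
  F_density : ∀ σ ∈ F, IsDensityMatrix σ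
  F_convex : Convex ℝ F
  F_compact : IsCompact F
  id_mem : ∃ Λ ∈ O, ∀ ρ, Λ.toFun ρ = ρ
  comp_mem : ∀ Λ₁ ∈ O, ∀ Λ₂ ∈ O, ∃ Λ ∈ O, ∀ ρ, Λ.toFun ρ = Λ₂.toFun (Λ₁.toFun ρ)
  free_mapsto : ∀ Λ ∈ O, ∀ σ ∈ F, Λ.toFun σ ∈ F
  prep_mem : ∀ σ ∈ F, ∃ Λ ∈ O, ∀ ρ : Matrix (Fin d) (Fin d) ℂ, Λ.toFun ρ = ρ.trace • σ

/-- `ρ → σ`: for every `ε > 0` some free operation maps `ρ` within trace-distance `ε` of `σ`. -/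
def Converts {d : ℕ} (RT : ResourceTheory d) (ρ σ : Matrix (Fin d) (Fin d) ℂ) : Prop :=
  ∀ ε > 0, ∃ Λ ∈ RT.O, traceNorm (Λ.toFun ρ - σ) < ε

/-- A resource monotone: nonnegative on states, nonincreasing under free operations,
vanishing on free states. -/
def IsMonotone {d : ℕ} (RT : ResourceTheory d) (R : Matrix (Fin d) (Fin d) ℂ → ℝ) : Prop :=
  (∀ ρ, IsDensityMatrix ρ → 0 ≤ R ρ) ∧
  (∀ ρ, IsDensityMatrix ρ → ∀ Λ ∈ RT.O, R (Λ.toFun ρ) ≤ R ρ) ∧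
  (∀ σ ∈ RT.F, R σ = 0)

/-- The pure state `|ψ⟩⟨ψ|`. -/
def pureState {ι : Type*} (ψ : ι → ℂ) : Matrix ι ι ℂ :=
  Matrix.vecMulVec ψ (star ψ)

/-- `ψ` is a unit vector. -/
def IsUnitVec {ι : Type*} [Fintype ι] (ψ : ι → ℂ) : Prop :=
  ∑ i, Complex.normSq (ψ i) = 1

/-- Trace-norm distance from `ρ` to a set of states. -/
noncomputable def distToSet {ι : Type*} [Fintype ι] [DecidableEq ι]
    (F : Set (Matrix ι ι ℂ)) (ρ : Matrix ι ι ℂ) : ℝ :=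
  sInf ((fun μ => traceNorm (ρ - μ)) '' F)

/-!
Every pure state `|χ⟩⟨χ|` is a universal source (it converts to every state) or a universal
target (every state converts to it). Indeed, if some state `X` does not convert to `|χ⟩⟨χ|`, then
neither does any mixture `t X + (1 - t) μ` with `t > 0`, because pure states are extreme points of
the state space; by total order `|χ⟩⟨χ|` converts to all these mixtures and hence, letting
`t → 0`, to `μ`. Free operations contract the trace norm, so both classes are closed in the unit
sphere, which they cover. The sphere is connected, so if `ψ` is a target and `φ` a source
(otherwise there is nothing to prove), some unit vector `χ` is both, and `ψ → χ → φ`.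

The trace-norm estimates come from the duality `‖M‖₁ = max {Re Tr (W M) | -1 ≤ W ≤ 1}` for
Hermitian `M`, the maximum being attained at `W = sign M`.
-/

open Matrix Topology Filter
open scoped MatrixOrder

namespace Matrix

variable {ι : Type*} [Fintype ι] [DecidableEq ι]

lemma re_trace_cfc {A : Matrix ι ι ℂ} (hA : A.IsHermitian) (f : ℝ → ℝ) :
    (cfc f A).trace.re = ∑ i, f (hA.eigenvalues i) := by
  rw [hA.cfc_eq, IsHermitian.cfc, Unitary.conjStarAlgAut_apply, trace_mul_cycle,
    Unitary.star_mul_self_of_mem hA.eigenvectorUnitary.2, one_mul, trace_diagonal, Complex.re_sum]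
  rfl

lemma posSemidef_cfc {A : Matrix ι ι ℂ} (hA : A.IsHermitian) {f : ℝ → ℝ} (hf : ∀ x, 0 ≤ f x) :
    (cfc f A).PosSemidef := by
  rw [hA.cfc_eq, IsHermitian.cfc, Unitary.conjStarAlgAut_apply, star_eq_conjTranspose]
  exact (posSemidef_diagonal_iff.mpr fun i => by simpa using hf _).mul_mul_conjTranspose_same _

lemma traceNorm_eq_re_trace_cfc_sqrt (M : Matrix ι ι ℂ) :
    traceNorm M = (cfc Real.sqrt (Mᴴ * M)).trace.re := by
  rw [(posSemidef_conjTranspose_mul_self M).1.cfc_eq, IsHermitian.cfc,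
    Unitary.conjStarAlgAut_apply]
  rfl

lemma traceNorm_neg (M : Matrix ι ι ℂ) : traceNorm (-M) = traceNorm M := by
  simp only [traceNorm_eq_re_trace_cfc_sqrt, conjTranspose_neg, neg_mul_neg]

lemma IsHermitian.traceNorm_eq_sum_abs_eigenvalues {M : Matrix ι ι ℂ} (hM : M.IsHermitian) :
    traceNorm M = ∑ i, |hM.eigenvalues i| := by
  have hsq : Mᴴ * M = cfc (· ^ 2 : ℝ → ℝ) M := by rw [cfc_pow_id M 2, hM.eq, sq]
  rw [traceNorm_eq_re_trace_cfc_sqrt, hsq, ← cfc_comp' Real.sqrt (· ^ 2 : ℝ → ℝ) M]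
  simp only [Real.sqrt_sq_eq_abs, re_trace_cfc hM]

lemma IsHermitian.re_trace_mul_self {M : Matrix ι ι ℂ} (hM : M.IsHermitian) :
    (M * M).trace.re = ∑ i, hM.eigenvalues i ^ 2 := by
  rw [← sq, ← cfc_pow_id (R := ℝ) M 2, re_trace_cfc hM]

lemma IsHermitian.traceNorm_le_sqrt {M : Matrix ι ι ℂ} (hM : M.IsHermitian) :
    traceNorm M ≤ √(Fintype.card ι * (M * M).trace.re) := by
  rw [hM.traceNorm_eq_sum_abs_eigenvalues, hM.re_trace_mul_self]
  refine Real.le_sqrt_of_sq_le ?_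
  simpa only [sq_abs, Finset.card_univ] using
    sq_sum_le_card_mul_sum_sq (s := Finset.univ) (f := fun i => |hM.eigenvalues i|)

lemma IsHermitian.exists_eq_sub_traceNorm_eq {M : Matrix ι ι ℂ} (hM : M.IsHermitian) :
    ∃ P N : Matrix ι ι ℂ, P.PosSemidef ∧ N.PosSemidef ∧ M = P - N ∧
      traceNorm M = P.trace.re + N.trace.re := by
  refine ⟨cfc (fun x : ℝ => max x 0) M, cfc (fun x : ℝ => max (-x) 0) M,
    posSemidef_cfc hM fun _ => le_max_right _ _, posSemidef_cfc hM fun _ => le_max_right _ _,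
    ?_, ?_⟩
  · rw [← cfc_sub (fun x : ℝ => max x 0) (fun x => max (-x) 0)]
    simp only [max_zero_sub_max_neg_zero_eq_self, cfc_id' ℝ M]
  · simp only [re_trace_cfc hM, ← Finset.sum_add_distrib, max_zero_add_max_neg_zero_eq_abs_self,
      hM.traceNorm_eq_sum_abs_eigenvalues]

lemma PosSemidef.re_trace_mul_nonneg {A B : Matrix ι ι ℂ} (hA : A.PosSemidef)
    (hB : B.PosSemidef) : 0 ≤ (A * B).trace.re := by
  obtain ⟨C, rfl⟩ := CStarAlgebra.nonneg_iff_eq_star_mul_self.mp hA.nonneg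
  rw [mul_assoc, trace_mul_comm, star_eq_conjTranspose]
  exact (Complex.nonneg_iff.mp (hB.mul_mul_conjTranspose_same C).trace_nonneg).1

lemma abs_re_trace_mul_le_of_posSemidef {W P : Matrix ι ι ℂ} (hW₁ : (1 - W).PosSemidef)
    (hW₂ : (1 + W).PosSemidef) (hP : P.PosSemidef) : |(W * P).trace.re| ≤ P.trace.re := by
  have h₁ := hW₁.re_trace_mul_nonneg hP
  have h₂ := hW₂.re_trace_mul_nonneg hP
  rw [sub_mul, one_mul, trace_sub, Complex.sub_re] at h₁
  rw [add_mul, one_mul, trace_add, Complex.add_re] at h₂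
  exact abs_le.mpr ⟨by linarith, by linarith⟩

lemma abs_re_trace_mul_sub_le {W P N : Matrix ι ι ℂ} (hW₁ : (1 - W).PosSemidef)
    (hW₂ : (1 + W).PosSemidef) (hP : P.PosSemidef) (hN : N.PosSemidef) :
    |(W * (P - N)).trace.re| ≤ P.trace.re + N.trace.re := by
  rw [mul_sub, trace_sub, Complex.sub_re]
  exact (abs_sub _ _).trans (add_le_add (abs_re_trace_mul_le_of_posSemidef hW₁ hW₂ hP)
    (abs_re_trace_mul_le_of_posSemidef hW₁ hW₂ hN))

lemma IsHermitian.abs_re_trace_mul_le_traceNorm {W M : Matrix ι ι ℂ} (hW₁ : (1 - W).PosSemidef)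
    (hW₂ : (1 + W).PosSemidef) (hM : M.IsHermitian) : |(W * M).trace.re| ≤ traceNorm M := by
  obtain ⟨P, N, hP, hN, rfl, hPN⟩ := hM.exists_eq_sub_traceNorm_eq
  exact hPN ▸ abs_re_trace_mul_sub_le hW₁ hW₂ hP hN

lemma IsHermitian.exists_re_trace_mul_eq_traceNorm {M : Matrix ι ι ℂ} (hM : M.IsHermitian) :
    ∃ W : Matrix ι ι ℂ, (1 - W).PosSemidef ∧ (1 + W).PosSemidef ∧
      (W * M).trace.re = traceNorm M := by
  set s : ℝ → ℝ := fun x => if 0 ≤ x then 1 else -1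
  have hs : ContinuousOn s (spectrum ℝ M) := (Set.toFinite _).continuousOn s
  refine ⟨cfc s M, ?_, ?_, ?_⟩
  · rw [← cfc_const_one ℝ M, ← cfc_sub (fun _ => (1 : ℝ)) s M (hg := hs)]
    exact posSemidef_cfc hM fun x => by simp only [s]; split_ifs <;> norm_num
  · rw [← cfc_const_one ℝ M, ← cfc_add (a := M) (fun _ => (1 : ℝ)) s (hg := hs)]
    exact posSemidef_cfc hM fun x => by simp only [s]; split_ifs <;> norm_num
  · rw [show cfc s M * M = cfc (fun x => s x * x) M by
      rw [cfc_mul s (fun x => x) M hs, cfc_id' ℝ M]]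
    rw [re_trace_cfc hM, hM.traceNorm_eq_sum_abs_eigenvalues]
    refine Finset.sum_congr rfl fun i _ => ?_
    simp only [s]
    split_ifs with h
    · rw [one_mul, abs_of_nonneg h]
    · rw [neg_one_mul, abs_of_neg (not_le.mp h)]

lemma traceNorm_sub_le {P N : Matrix ι ι ℂ} (hP : P.PosSemidef) (hN : N.PosSemidef) :
    traceNorm (P - N) ≤ P.trace.re + N.trace.re := by
  obtain ⟨W, hW₁, hW₂, hW⟩ := (hP.1.sub hN.1).exists_re_trace_mul_eq_traceNorm
  exact hW ▸ (le_abs_self _).trans (abs_re_trace_mul_sub_le hW₁ hW₂ hP hN)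

lemma IsHermitian.traceNorm_add_le {A B : Matrix ι ι ℂ} (hA : A.IsHermitian)
    (hB : B.IsHermitian) : traceNorm (A + B) ≤ traceNorm A + traceNorm B := by
  obtain ⟨P, N, hP, hN, rfl, hPN⟩ := hA.exists_eq_sub_traceNorm_eq
  obtain ⟨P', N', hP', hN', rfl, hPN'⟩ := hB.exists_eq_sub_traceNorm_eq
  rw [show P - N + (P' - N') = (P + P') - (N + N') by abel, hPN, hPN']
  refine (traceNorm_sub_le (hP.add hP') (hN.add hN')).trans_eq ?_
  simp only [trace_add, Complex.add_re]
  ring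

lemma IsHermitian.traceNorm_nonneg {M : Matrix ι ι ℂ} (hM : M.IsHermitian) :
    0 ≤ traceNorm M :=
  hM.traceNorm_eq_sum_abs_eigenvalues ▸ Finset.sum_nonneg fun _ _ => abs_nonneg _

lemma tendsto_traceNorm_sub {X : Type*} [TopologicalSpace X] {f : X → Matrix ι ι ℂ}
    (hf : Continuous f) (hfh : ∀ x, (f x).IsHermitian) (x : X) :
    Tendsto (fun y => traceNorm (f x - f y)) (𝓝 x) (𝓝 0) := by
  have hbound : Tendsto (fun y => √(Fintype.card ι * ((f x - f y) * (f x - f y)).trace.re))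
      (𝓝 x) (𝓝 0) := by
    have hcont : Continuous fun y => √(Fintype.card ι * ((f x - f y) * (f x - f y)).trace.re) := by
      fun_prop
    simpa using hcont.tendsto x
  exact squeeze_zero (fun y => ((hfh x).sub (hfh y)).traceNorm_nonneg)
    (fun y => ((hfh x).sub (hfh y)).traceNorm_le_sqrt) hbound

end Matrix

section Channels

variable {ι : Type*} [Fintype ι] [DecidableEq ι] {Λ : Matrix ι ι ℂ →ₗ[ℂ] Matrix ι ι ℂ}

lemma IsCPTP.posSemidef_map (hΛ : IsCPTP Λ) {M : Matrix ι ι ℂ} (hM : M.PosSemidef) :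
    (Λ M).PosSemidef := by
  -- the `1`-fold amplification of `Λ` is `Λ` itself, up to reindexing by `ι × Fin 1 ≃ ι`
  have h := hΛ.1 1 _ (hM.submatrix (Prod.fst : ι × Fin 1 → ι))
  exact h.submatrix fun i => (i, 0)

lemma IsCPTP.isHermitian_map (hΛ : IsCPTP Λ) {M : Matrix ι ι ℂ} (hM : M.IsHermitian) :
    (Λ M).IsHermitian := by
  obtain ⟨P, N, hP, hN, rfl, -⟩ := hM.exists_eq_sub_traceNorm_eq
  rw [map_sub]
  exact (hΛ.posSemidef_map hP).1.sub (hΛ.posSemidef_map hN).1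

lemma IsCPTP.isDensityMatrix_map (hΛ : IsCPTP Λ) {ρ : Matrix ι ι ℂ} (hρ : IsDensityMatrix ρ) :
    IsDensityMatrix (Λ ρ) :=
  ⟨hΛ.posSemidef_map hρ.1, (hΛ.2 ρ).trans hρ.2⟩

lemma IsCPTP.traceNorm_map_le (hΛ : IsCPTP Λ) {M : Matrix ι ι ℂ} (hM : M.IsHermitian) :
    traceNorm (Λ M) ≤ traceNorm M := by
  obtain ⟨P, N, hP, hN, rfl, hPN⟩ := hM.exists_eq_sub_traceNorm_eq
  rw [map_sub, hPN, ← hΛ.2 P, ← hΛ.2 N]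
  exact traceNorm_sub_le (hΛ.posSemidef_map hP) (hΛ.posSemidef_map hN)

end Channels

section States

variable {ι : Type*} {χ : ι → ℂ}

lemma continuous_pureState : Continuous (pureState : (ι → ℂ) → Matrix ι ι ℂ) := by
  unfold pureState
  fun_prop

variable [Fintype ι]

lemma convex_setOf_isDensityMatrix : Convex ℝ {ρ : Matrix ι ι ℂ | IsDensityMatrix ρ} := by
  intro ρ hρ σ hσ a b ha hb hab
  refine ⟨(hρ.1.smul ha).add (hσ.1.smul hb), ?_⟩
  rw [trace_add, trace_smul, trace_smul, hρ.2, hσ.2, ← add_smul, hab, one_smul]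

lemma posSemidef_pureState (χ : ι → ℂ) : (pureState χ).PosSemidef :=
  posSemidef_vecMulVec_self_star χ

lemma isHermitian_pureState (χ : ι → ℂ) : (pureState χ).IsHermitian :=
  (posSemidef_pureState χ).1

lemma IsUnitVec.star_dotProduct_self (hχ : IsUnitVec χ) : star χ ⬝ᵥ χ = 1 := by
  simp only [dotProduct, Pi.star_apply, RCLike.star_def, ← Complex.normSq_eq_conj_mul_self]
  exact_mod_cast hχ

lemma IsUnitVec.pureState_mul_self (hχ : IsUnitVec χ) :
    pureState χ * pureState χ = pureState χ := by
  rw [pureState, vecMulVec_mul_vecMulVec, hχ.star_dotProduct_self, one_smul]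

lemma IsUnitVec.isDensityMatrix_pureState (hχ : IsUnitVec χ) : IsDensityMatrix (pureState χ) :=
  ⟨posSemidef_pureState χ, by
    rw [pureState, trace_vecMulVec, dotProduct_comm, hχ.star_dotProduct_self]⟩

lemma IsUnitVec.posSemidef_one_sub_pureState [DecidableEq ι] (hχ : IsUnitVec χ) :
    (1 - pureState χ).PosSemidef := by
  have h : (1 - pureState χ)ᴴ * (1 - pureState χ) = 1 - pureState χ := by
    rw [conjTranspose_sub, conjTranspose_one, (isHermitian_pureState χ).eq, sub_mul, mul_sub,
      mul_sub, hχ.pureState_mul_self]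
    simp only [one_mul, mul_one, sub_self, sub_zero]
  exact h ▸ posSemidef_conjTranspose_mul_self _

end States

section PureStateEstimates

variable {ι : Type*} [Fintype ι] [DecidableEq ι] {χ : ι → ℂ} {τ : Matrix ι ι ℂ}

lemma IsUnitVec.re_trace_pureState_mul_le_one (hχ : IsUnitVec χ) (hτ : IsDensityMatrix τ) :
    (pureState χ * τ).trace.re ≤ 1 := by
  have h := abs_re_trace_mul_le_of_posSemidef hχ.posSemidef_one_sub_pureState
    (PosSemidef.one.add (posSemidef_pureState χ)) hτ.1
  rw [hτ.2, Complex.one_re] at h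
  exact (le_abs_self _).trans h

lemma IsUnitVec.one_sub_traceNorm_le_re_trace (hχ : IsUnitVec χ) (hτ : τ.IsHermitian) :
    1 - traceNorm (τ - pureState χ) ≤ (pureState χ * τ).trace.re := by
  have h := (hτ.sub (isHermitian_pureState χ)).abs_re_trace_mul_le_traceNorm
    hχ.posSemidef_one_sub_pureState (PosSemidef.one.add (posSemidef_pureState χ))
  have hsplit : pureState χ * τ = pureState χ * (τ - pureState χ) + pureState χ := by
    rw [mul_sub, hχ.pureState_mul_self, sub_add_cancel]
  rw [hsplit, trace_add, Complex.add_re, hχ.isDensityMatrix_pureState.2, Complex.one_re]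
  linarith [neg_abs_le ((pureState χ * (τ - pureState χ)).trace.re)]

lemma IsDensityMatrix.re_trace_mul_self_le_one (hτ : IsDensityMatrix τ) :
    (τ * τ).trace.re ≤ 1 := by
  obtain ⟨hpsd, htr⟩ := hτ
  have hsum : ∑ i, hpsd.1.eigenvalues i = 1 := by
    have h := hpsd.1.trace_eq_sum_eigenvalues
    rw [htr] at h
    simpa using (congrArg Complex.re h).symm
  rw [hpsd.1.re_trace_mul_self, ← one_pow 2, ← hsum]
  exact Finset.sum_sq_le_sq_sum_of_nonneg fun i _ => hpsd.eigenvalues_nonneg i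

lemma IsUnitVec.traceNorm_sub_pureState_le (hχ : IsUnitVec χ) (hτ : IsDensityMatrix τ) :
    traceNorm (τ - pureState χ) ≤
      √(2 * Fintype.card ι * (1 - (pureState χ * τ).trace.re)) := by
  refine (hτ.1.1.sub (isHermitian_pureState χ)).traceNorm_le_sqrt.trans (Real.sqrt_le_sqrt ?_)
  have hexp : ((τ - pureState χ) * (τ - pureState χ)).trace.re =
      (τ * τ).trace.re - 2 * (pureState χ * τ).trace.re + 1 := by
    rw [sub_mul, mul_sub, mul_sub, hχ.pureState_mul_self, trace_sub, trace_sub, trace_sub,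
      trace_mul_comm τ (pureState χ), hχ.isDensityMatrix_pureState.2]
    simp only [Complex.sub_re, Complex.one_re]
    ring
  rw [hexp]
  nlinarith [hτ.re_trace_mul_self_le_one, (Nat.cast_nonneg _ : (0 : ℝ) ≤ Fintype.card ι)]

lemma exists_traceNorm_pureState_sub_lt_of_mem_closure {S : Set (ι → ℂ)} {v : ι → ℂ}
    (hv : v ∈ closure S) {ε : ℝ} (hε : 0 < ε) :
    ∃ w ∈ S, traceNorm (pureState v - pureState w) < ε := by
  have hnear := (tendsto_order.1
    (tendsto_traceNorm_sub continuous_pureState isHermitian_pureState v)).2 ε hε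
  obtain ⟨w, hw, hwS⟩ := mem_closure_iff_nhds.mp hv _ hnear
  exact ⟨w, hwS, hw⟩

end PureStateEstimates

lemma isPreconnected_setOf_isUnitVec {ι : Type*} [Fintype ι] :
    IsPreconnected {v : ι → ℂ | IsUnitVec v} := by
  rcases isEmpty_or_nonempty ι with hι | hι
  · convert isPreconnected_empty
    ext v
    simp [IsUnitVec]
  have hrank : 1 < Module.rank ℝ (EuclideanSpace ℂ ι) := by
    rw [← Module.finrank_eq_rank, ← Module.finrank_mul_finrank ℝ ℂ, Complex.finrank_real_complex,
      finrank_euclideanSpace]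
    exact_mod_cast (by linarith [Fintype.card_pos (α := ι)] : 1 < 2 * Fintype.card ι)
  have hsphere : {v : ι → ℂ | IsUnitVec v} =
      WithLp.ofLp '' Metric.sphere (0 : EuclideanSpace ℂ ι) 1 := by
    ext v
    simp only [Set.mem_image, mem_sphere_zero_iff_norm, EuclideanSpace.norm_eq,
      Real.sqrt_eq_one, IsUnitVec, Complex.normSq_eq_norm_sq]
    exact ⟨fun hv => ⟨WithLp.toLp 2 v, hv, rfl⟩, fun ⟨x, hx, hxv⟩ => hxv ▸ hx⟩
  rw [hsphere]
  exact (isConnected_sphere hrank 0 zero_le_one).isPreconnected.image _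
    (PiLp.continuous_ofLp 2 _).continuousOn

section Conversion

variable {d : ℕ} (RT : ResourceTheory d)

def IsUniversalSource (ρ : Matrix (Fin d) (Fin d) ℂ) : Prop :=
  ∀ σ, IsDensityMatrix σ → Converts RT ρ σ

def IsUniversalTarget (σ : Matrix (Fin d) (Fin d) ℂ) : Prop :=
  ∀ ρ, IsDensityMatrix ρ → Converts RT ρ σ

variable {RT} {ρ σ τ : Matrix (Fin d) (Fin d) ℂ}

lemma Converts.trans (h₁ : Converts RT ρ σ) (h₂ : Converts RT σ τ) (hρ : ρ.IsHermitian)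
    (hσ : σ.IsHermitian) (hτ : τ.IsHermitian) : Converts RT ρ τ := by
  intro ε hε
  obtain ⟨Λ₁, hΛ₁O, hΛ₁⟩ := h₁ (ε / 2) (half_pos hε)
  obtain ⟨Λ₂, hΛ₂O, hΛ₂⟩ := h₂ (ε / 2) (half_pos hε)
  obtain ⟨Λ, hΛO, hΛ⟩ := RT.comp_mem Λ₁ hΛ₁O Λ₂ hΛ₂O
  have hD : (Λ₁.toFun ρ - σ).IsHermitian := (Λ₁.cptp.isHermitian_map hρ).sub hσ
  refine ⟨Λ, hΛO, ?_⟩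
  calc traceNorm (Λ.toFun ρ - τ)
      = traceNorm (Λ₂.toFun (Λ₁.toFun ρ - σ) + (Λ₂.toFun σ - τ)) := by
        rw [hΛ, map_sub, sub_add_sub_cancel]
    _ ≤ traceNorm (Λ₂.toFun (Λ₁.toFun ρ - σ)) + traceNorm (Λ₂.toFun σ - τ) :=
        (Λ₂.cptp.isHermitian_map hD).traceNorm_add_le ((Λ₂.cptp.isHermitian_map hσ).sub hτ)
    _ < ε / 2 + ε / 2 := add_lt_add ((Λ₂.cptp.traceNorm_map_le hD).trans_lt hΛ₁) hΛ₂
    _ = ε := add_halves ε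

lemma Converts.of_forall_near_left (hρ : ρ.IsHermitian) (hσ : σ.IsHermitian)
    (h : ∀ ε > 0, ∃ ρ', ρ'.IsHermitian ∧ traceNorm (ρ - ρ') < ε ∧ Converts RT ρ' σ) :
    Converts RT ρ σ := by
  intro ε hε
  obtain ⟨ρ', hρ', hnear, hconv⟩ := h (ε / 2) (half_pos hε)
  obtain ⟨Λ, hΛO, hΛ⟩ := hconv (ε / 2) (half_pos hε)
  have hD : (ρ - ρ').IsHermitian := hρ.sub hρ'
  refine ⟨Λ, hΛO, ?_⟩
  calc traceNorm (Λ.toFun ρ - σ) = traceNorm (Λ.toFun (ρ - ρ') + (Λ.toFun ρ' - σ)) := by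
        rw [map_sub, sub_add_sub_cancel]
    _ ≤ traceNorm (Λ.toFun (ρ - ρ')) + traceNorm (Λ.toFun ρ' - σ) :=
        (Λ.cptp.isHermitian_map hD).traceNorm_add_le ((Λ.cptp.isHermitian_map hρ').sub hσ)
    _ < ε / 2 + ε / 2 := add_lt_add ((Λ.cptp.traceNorm_map_le hD).trans_lt hnear) hΛ
    _ = ε := add_halves ε

lemma Converts.of_forall_near_right (hρ : ρ.IsHermitian) (hσ : σ.IsHermitian)
    (h : ∀ ε > 0, ∃ σ', σ'.IsHermitian ∧ traceNorm (σ - σ') < ε ∧ Converts RT ρ σ') :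
    Converts RT ρ σ := by
  intro ε hε
  obtain ⟨σ', hσ', hnear, hconv⟩ := h (ε / 2) (half_pos hε)
  obtain ⟨Λ, hΛO, hΛ⟩ := hconv (ε / 2) (half_pos hε)
  refine ⟨Λ, hΛO, ?_⟩
  calc traceNorm (Λ.toFun ρ - σ) = traceNorm ((Λ.toFun ρ - σ') + -(σ - σ')) := by
        rw [neg_sub, sub_add_sub_cancel]
    _ ≤ traceNorm (Λ.toFun ρ - σ') + traceNorm (-(σ - σ')) :=
        ((Λ.cptp.isHermitian_map hρ).sub hσ').traceNorm_add_le (hσ.sub hσ').neg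
    _ < ε / 2 + ε / 2 := by rw [traceNorm_neg]; exact add_lt_add hΛ hnear
    _ = ε := add_halves ε

variable (RT) {χ : Fin d → ℂ}

lemma converts_pureState_iff (hχ : IsUnitVec χ) (hρ : IsDensityMatrix ρ) :
    Converts RT ρ (pureState χ) ↔
      ∀ ε > 0, ∃ Λ ∈ RT.O, 1 - ε < (pureState χ * Λ.toFun ρ).trace.re := by
  refine ⟨fun h ε hε => ?_, fun h ε hε => ?_⟩
  · obtain ⟨Λ, hΛO, hΛ⟩ := h ε hε
    exact ⟨Λ, hΛO, by linarith [hχ.one_sub_traceNorm_le_re_trace (Λ.cptp.isHermitian_map hρ.1.1)]⟩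
  · obtain ⟨Λ, hΛO, hΛ⟩ := h (ε ^ 2 / (2 * d + 1)) (by positivity)
    refine ⟨Λ, hΛO, (hχ.traceNorm_sub_pureState_le (Λ.cptp.isDensityMatrix_map hρ)).trans_lt ?_⟩
    rw [Fintype.card_fin, Real.sqrt_lt' hε]
    calc 2 * (d : ℝ) * (1 - (pureState χ * Λ.toFun ρ).trace.re)
        ≤ 2 * d * (ε ^ 2 / (2 * d + 1)) := by gcongr; linarith
      _ < ε ^ 2 := by
        rw [mul_div_assoc', div_lt_iff₀ (by positivity)]
        nlinarith [sq_pos_of_pos hε]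

/-- The fidelity with `χ` is affine on states and at most `1`, so it is close to `1` on a mixture
only if it is close to `1` on each component. -/
lemma converts_pureState_of_converts_mix {X μ : Matrix (Fin d) (Fin d) ℂ} (hχ : IsUnitVec χ)
    (hX : IsDensityMatrix X) (hμ : IsDensityMatrix μ) {t : ℝ} (ht₀ : 0 < t) (ht₁ : t ≤ 1)
    (h : Converts RT (t • X + (1 - t) • μ) (pureState χ)) : Converts RT X (pureState χ) := by
  have hν : IsDensityMatrix (t • X + (1 - t) • μ) :=
    convex_setOf_isDensityMatrix hX hμ ht₀.le (sub_nonneg.2 ht₁) (add_sub_cancel _ _)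
  rw [converts_pureState_iff RT hχ hν] at h
  rw [converts_pureState_iff RT hχ hX]
  intro ε hε
  obtain ⟨Λ, hΛO, hΛ⟩ := h (t * ε) (mul_pos ht₀ hε)
  refine ⟨Λ, hΛO, ?_⟩
  have hmix : (pureState χ * Λ.toFun (t • X + (1 - t) • μ)).trace.re =
      t * (pureState χ * Λ.toFun X).trace.re + (1 - t) * (pureState χ * Λ.toFun μ).trace.re := by
    simp only [map_add, LinearMap.map_smul_of_tower, mul_add, mul_smul_comm, trace_add,
      trace_smul, Complex.add_re, Complex.smul_re, smul_eq_mul]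
  have hμ₁ := hχ.re_trace_pureState_mul_le_one (Λ.cptp.isDensityMatrix_map hμ)
  nlinarith [mul_le_mul_of_nonneg_left hμ₁ (sub_nonneg.2 ht₁)]

variable {RT}

lemma isUniversalSource_or_isUniversalTarget_pureState
    (htot : ∀ ρ σ : Matrix (Fin d) (Fin d) ℂ, IsDensityMatrix ρ → IsDensityMatrix σ →
      Converts RT ρ σ ∨ Converts RT σ ρ)
    (hχ : IsUnitVec χ) :
    IsUniversalSource RT (pureState χ) ∨ IsUniversalTarget RT (pureState χ) := by
  refine or_iff_not_imp_right.mpr fun hnot μ hμ => ?_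
  obtain ⟨X, hX, hXχ⟩ : ∃ X, IsDensityMatrix X ∧ ¬Converts RT X (pureState χ) := by
    simpa [IsUniversalTarget] using hnot
  refine Converts.of_forall_near_right (isHermitian_pureState χ) hμ.1.1 fun ε hε => ?_
  set t := min 1 (ε / 4)
  have ht₀ : 0 < t := lt_min one_pos (by positivity)
  have ht₁ : t ≤ 1 := min_le_left _ _
  have hν : IsDensityMatrix (t • X + (1 - t) • μ) :=
    convex_setOf_isDensityMatrix hX hμ ht₀.le (sub_nonneg.2 ht₁) (add_sub_cancel _ _)
  refine ⟨t • X + (1 - t) • μ, hν.1.1, ?_, ?_⟩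
  · calc traceNorm (μ - (t • X + (1 - t) • μ)) = traceNorm (t • μ - t • X) := by
          congr 1
          module
      _ ≤ (t • μ).trace.re + (t • X).trace.re :=
          traceNorm_sub_le (hμ.1.smul ht₀.le) (hX.1.smul ht₀.le)
      _ = 2 * t := by simp only [trace_smul, hμ.2, hX.2, Complex.smul_re, Complex.one_re]; ring
      _ < ε := by linarith [min_le_right 1 (ε / 4)]
  · refine (htot _ _ hχ.isDensityMatrix_pureState hν).resolve_right fun h => hXχ ?_
    exact converts_pureState_of_converts_mix RT hχ hX hμ ht₀ ht₁ h

variable (RT)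

lemma isClosed_setOf_converts_pureState_left (hσ : σ.IsHermitian) :
    IsClosed {v : Fin d → ℂ | Converts RT (pureState v) σ} := by
  refine isClosed_of_closure_subset fun v hv =>
    Converts.of_forall_near_left (isHermitian_pureState v) hσ fun ε hε => ?_
  obtain ⟨w, hwS, hw⟩ := exists_traceNorm_pureState_sub_lt_of_mem_closure hv hε
  exact ⟨pureState w, isHermitian_pureState w, hw, hwS⟩

lemma isClosed_setOf_converts_pureState_right (hρ : ρ.IsHermitian) :
    IsClosed {v : Fin d → ℂ | Converts RT ρ (pureState v)} := by
  refine isClosed_of_closure_subset fun v hv =>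
    Converts.of_forall_near_right hρ (isHermitian_pureState v) fun ε hε => ?_
  obtain ⟨w, hwS, hw⟩ := exists_traceNorm_pureState_sub_lt_of_mem_closure hv hε
  exact ⟨pureState w, isHermitian_pureState w, hw, hwS⟩

lemma isClosed_setOf_isUniversalSource_pureState :
    IsClosed {v : Fin d → ℂ | IsUniversalSource RT (pureState v)} := by
  simp only [IsUniversalSource, Set.ofPred_forall]
  exact isClosed_iInter fun σ => isClosed_iInter fun hσ =>
    isClosed_setOf_converts_pureState_left RT hσ.1.1

lemma isClosed_setOf_isUniversalTarget_pureState :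
    IsClosed {v : Fin d → ℂ | IsUniversalTarget RT (pureState v)} := by
  simp only [IsUniversalTarget, Set.ofPred_forall]
  exact isClosed_iInter fun ρ => isClosed_iInter fun hρ =>
    isClosed_setOf_converts_pureState_right RT hρ.1.1

end Conversion

/-- Any totally ordered resource theory allows for free transformations
between any two pure states. -/
theorem totally_ordered_pure_state_conversion {d : ℕ} (RT : ResourceTheory d)
    (htot : ∀ ρ σ : Matrix (Fin d) (Fin d) ℂ, IsDensityMatrix ρ → IsDensityMatrix σ →
      Converts RT ρ σ ∨ Converts RT σ ρ)
    (ψ φ : Fin d → ℂ) (hψ : IsUnitVec ψ) (hφ : IsUnitVec φ) :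
    Converts RT (pureState ψ) (pureState φ) := by
  rcases isUniversalSource_or_isUniversalTarget_pureState htot hψ with hψS | hψT
  · exact hψS _ hφ.isDensityMatrix_pureState
  rcases isUniversalSource_or_isUniversalTarget_pureState htot hφ with hφS | hφT
  · -- the unit sphere is connected and covered by two closed sets, so they intersect
    obtain ⟨χ, hχ, hχS, hχT⟩ := isPreconnected_closed_iff.mp isPreconnected_setOf_isUnitVec _ _
      (isClosed_setOf_isUniversalSource_pureState RT)
      (isClosed_setOf_isUniversalTarget_pureState RT)
      (fun χ hχ => isUniversalSource_or_isUniversalTarget_pureState htot hχ)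
      ⟨φ, hφ, hφS⟩ ⟨ψ, hψ, hψT⟩
    exact (hχT _ hψ.isDensityMatrix_pureState).trans (hχS _ hφ.isDensityMatrix_pureState)
      (isHermitian_pureState ψ) (isHermitian_pureState χ) (isHermitian_pureState φ)
  · exact hφT _ hψ.isDensityMatrix_pureState

end
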